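/- Mixed-norm bound for the trilinear form in three dimensions: There exists a universal constant C > 0 such that for all continuously differentiable compactly supported vector fields u, v, w : ℝ³ → ℝ³, one has |b*(u,v,w)| ≤ C · ‖u‖_{L²} · (‖Dv‖_{L³} + ‖v‖_{L∞}) · ‖Dw‖_{L²}. -/

import Mathlib

/-! Both halves of `b*` are bounded pointwise by `|u| |Dv| |w|` and `|u| |Dw| |v|`, using that the
operator norm of a matrix is at most its Frobenius norm. Hölder with exponents `(2, 3, 6)` and the
Gagliardo–Nirenberg–Sobolev embedding `‖w‖_{L⁶} ≤ C ‖Dw‖_{L²}` in `ℝ³` handle the first half,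
Hölder with exponents `(2, 2, ∞)` the second. -/

open MeasureTheory
open scoped RealInnerProductSpace ENNReal

/-- The convective term `u·∇v`, i.e. `x ↦ Dv(x)(u(x))`. -/
noncomputable def convTerm {d : ℕ}
    (u v : EuclideanSpace ℝ (Fin d) → EuclideanSpace ℝ (Fin d)) :
    EuclideanSpace ℝ (Fin d) → EuclideanSpace ℝ (Fin d) :=
  fun x => fderiv ℝ v x (u x)

/-- The L² inner product `(f, g) = ∫ f(x)·g(x) dx` of two vector fields. -/
noncomputable def l2inner {d : ℕ}
    (f g : EuclideanSpace ℝ (Fin d) → EuclideanSpace ℝ (Fin d)) : ℝ :=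
  ∫ x, ⟪f x, g x⟫

/-- The skew-symmetric trilinear form `b*(u,v,w) = ½(u·∇v, w) − ½(u·∇w, v)`. -/
noncomputable def bstar {d : ℕ}
    (u v w : EuclideanSpace ℝ (Fin d) → EuclideanSpace ℝ (Fin d)) : ℝ :=
  (1 / 2) * l2inner (convTerm u v) w - (1 / 2) * l2inner (convTerm u w) v

/-- The Frobenius norm of the Jacobian matrix of `v` at `x`:
`(∑ i ‖Dv(x) eᵢ‖²)^{1/2} = (∑ i ∑ j (∂vⱼ/∂xᵢ)²)^{1/2}`. -/
noncomputable def frobNorm {d : ℕ}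
    (v : EuclideanSpace ℝ (Fin d) → EuclideanSpace ℝ (Fin d))
    (x : EuclideanSpace ℝ (Fin d)) : ℝ :=
  Real.sqrt (∑ i : Fin d, ‖fderiv ℝ v x (EuclideanSpace.single i 1)‖ ^ 2)

/-- `‖Dv‖_{Lᵖ}`: the Lᵖ norm over `ℝ^d` of `x ↦ ‖Dv(x)‖_F`. -/
noncomputable def gradLp {d : ℕ} (p : ℝ≥0∞)
    (v : EuclideanSpace ℝ (Fin d) → EuclideanSpace ℝ (Fin d)) : ℝ :=
  (eLpNorm (fun x => frobNorm v x) p volume).toReal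

namespace ENNReal

instance holderTriple_three_six_two : HolderTriple 3 6 2 where
  inv_add_inv_eq_inv := by
    rw [← ENNReal.toReal_eq_toReal_iff' (by finiteness) (by finiteness)]
    rw [ENNReal.toReal_add (by finiteness) (by finiteness)]
    norm_num

end ENNReal

section FrobeniusNorm

variable {d : ℕ} {u v w z : EuclideanSpace ℝ (Fin d) → EuclideanSpace ℝ (Fin d)}

lemma frobNorm_nonneg (v : EuclideanSpace ℝ (Fin d) → EuclideanSpace ℝ (Fin d))
    (x : EuclideanSpace ℝ (Fin d)) : 0 ≤ frobNorm v x :=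
  Real.sqrt_nonneg _

lemma norm_fderiv_apply_le_mul_frobNorm (v : EuclideanSpace ℝ (Fin d) → EuclideanSpace ℝ (Fin d))
    (x y : EuclideanSpace ℝ (Fin d)) : ‖fderiv ℝ v x y‖ ≤ ‖y‖ * frobNorm v x := by
  set A := fderiv ℝ v x
  have hy : y = ∑ i, y i • EuclideanSpace.single i (1 : ℝ) := by
    ext j
    rw [WithLp.ofLp_sum, Finset.sum_apply]
    simp [PiLp.single_apply]
  calc ‖A y‖ = ‖∑ i, y i • A (EuclideanSpace.single i 1)‖ := by
        conv_lhs => rw [hy, map_sum]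
        simp only [map_smul]
    _ ≤ ∑ i, |y i| * ‖A (EuclideanSpace.single i 1)‖ :=
        (norm_sum_le _ _).trans_eq (by simp only [norm_smul, Real.norm_eq_abs])
    _ ≤ √(∑ i, |y i| ^ 2) * √(∑ i, ‖A (EuclideanSpace.single i 1)‖ ^ 2) :=
        Real.sum_mul_le_sqrt_mul_sqrt _ _ _
    _ = ‖y‖ * frobNorm v x := by
        simp [EuclideanSpace.norm_eq, frobNorm, A]

lemma norm_fderiv_le_frobNorm (v : EuclideanSpace ℝ (Fin d) → EuclideanSpace ℝ (Fin d))
    (x : EuclideanSpace ℝ (Fin d)) : ‖fderiv ℝ v x‖ ≤ frobNorm v x :=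
  ContinuousLinearMap.opNorm_le_bound _ (frobNorm_nonneg v x) fun y => by
    rw [mul_comm]
    exact norm_fderiv_apply_le_mul_frobNorm v x y

lemma gradLp_nonneg (p : ℝ≥0∞) (v : EuclideanSpace ℝ (Fin d) → EuclideanSpace ℝ (Fin d)) :
    0 ≤ gradLp p v :=
  ENNReal.toReal_nonneg

lemma ContDiff.continuous_frobNorm (hv : ContDiff ℝ 1 v) : Continuous (frobNorm v) := by
  have hDv : Continuous (fderiv ℝ v) := hv.continuous_fderiv one_ne_zero
  unfold frobNorm
  fun_prop

lemma hasCompactSupport_frobNorm (hv : HasCompactSupport v) :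
    HasCompactSupport (frobNorm v) :=
  (hv.fderiv ℝ).comp_left (g := fun A : EuclideanSpace ℝ (Fin d) →L[ℝ] EuclideanSpace ℝ (Fin d) =>
    √(∑ i : Fin d, ‖A (EuclideanSpace.single i 1)‖ ^ 2)) (by simp)

lemma ContDiff.memLp_frobNorm (hv : ContDiff ℝ 1 v) (h2v : HasCompactSupport v) (p : ℝ≥0∞) :
    MemLp (frobNorm v) p volume :=
  hv.continuous_frobNorm.memLp_of_hasCompactSupport (hasCompactSupport_frobNorm h2v)

lemma toReal_eLpNorm_le_gradLp_of_eq_inner (hw : ContDiff ℝ 1 w) (h2w : HasCompactSupport w)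
    {p p' : NNReal} (hp : 1 ≤ p) (hd : 0 < d) (hp' : (p' : ℝ)⁻¹ = p⁻¹ - (d : ℝ)⁻¹) :
    (eLpNorm w p' volume).toReal ≤
      eLpNormLESNormFDerivOfEqInnerConst (volume : Measure (EuclideanSpace ℝ (Fin d))) p *
        gradLp p w := by
  have hsob := eLpNorm_le_eLpNorm_fderiv_of_eq_inner volume hw h2w hp
    (by rwa [finrank_euclideanSpace_fin]) (by rwa [finrank_euclideanSpace_fin])
  have hDw : eLpNorm (fderiv ℝ w) p volume ≤ eLpNorm (frobNorm w) p volume :=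
    eLpNorm_mono_real fun x => norm_fderiv_le_frobNorm w x
  rw [gradLp, ← ENNReal.coe_toReal, ← ENNReal.toReal_mul]
  exact ENNReal.toReal_mono
    (ENNReal.mul_ne_top ENNReal.coe_ne_top ((hw.memLp_frobNorm h2w p).eLpNorm_ne_top))
    (hsob.trans (mul_le_mul_right hDw _))

lemma abs_inner_convTerm_le (u v z : EuclideanSpace ℝ (Fin d) → EuclideanSpace ℝ (Fin d))
    (x : EuclideanSpace ℝ (Fin d)) :
    |⟪convTerm u v x, z x⟫| ≤ ‖u x‖ * (frobNorm v x * ‖z x‖) :=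
  calc |⟪convTerm u v x, z x⟫| ≤ ‖fderiv ℝ v x (u x)‖ * ‖z x‖ := abs_real_inner_le_norm _ _
    _ ≤ ‖u x‖ * frobNorm v x * ‖z x‖ := by
        gcongr
        exact norm_fderiv_apply_le_mul_frobNorm v x (u x)
    _ = ‖u x‖ * (frobNorm v x * ‖z x‖) := mul_assoc _ _ _

lemma eLpNorm_inner_convTerm_le {μ : Measure (EuclideanSpace ℝ (Fin d))} {q r : ℝ≥0∞}
    [ENNReal.HolderTriple q r 2] (hu : AEStronglyMeasurable u μ)
    (hv : AEStronglyMeasurable (frobNorm v) μ) (hz : AEStronglyMeasurable z μ) :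
    eLpNorm (fun x => ⟪convTerm u v x, z x⟫) 1 μ ≤
      eLpNorm u 2 μ * (eLpNorm (frobNorm v) q μ * eLpNorm z r μ) := by
  have hpointwise : eLpNorm (fun x => ⟪convTerm u v x, z x⟫) 1 μ ≤
      eLpNorm ((fun x => ‖u x‖) • (frobNorm v • z)) 1 μ := by
    refine eLpNorm_mono fun x => ?_
    simpa [norm_smul, abs_of_nonneg (frobNorm_nonneg v x)] using abs_inner_convTerm_le u v z x
  calc _ ≤ _ := hpointwise
    _ ≤ eLpNorm (fun x => ‖u x‖) 2 μ * eLpNorm (frobNorm v • z) 2 μ :=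
        eLpNorm_smul_le_mul_eLpNorm (hv.smul hz) hu.norm
    _ ≤ eLpNorm u 2 μ * (eLpNorm (frobNorm v) q μ * eLpNorm z r μ) := by
        rw [eLpNorm_norm]
        gcongr
        exact eLpNorm_smul_le_mul_eLpNorm hz hv

lemma abs_integral_le_toReal_eLpNorm_one {α : Type*} [MeasurableSpace α] (μ : Measure α)
    (f : α → ℝ) : |∫ x, f x ∂μ| ≤ (eLpNorm f 1 μ).toReal := by
  rw [eLpNorm_one_eq_lintegral_enorm, ← Real.norm_eq_abs]
  simpa only [ofReal_norm] using norm_integral_le_lintegral_norm f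

lemma abs_l2inner_convTerm_le {q r : ℝ≥0∞} [ENNReal.HolderTriple q r 2]
    (hu : MemLp u 2 volume) (hv : MemLp (frobNorm v) q volume) (hz : MemLp z r volume) :
    |l2inner (convTerm u v) z| ≤
      (eLpNorm u 2 volume).toReal * (gradLp q v * (eLpNorm z r volume).toReal) := by
  have hfin : eLpNorm u 2 volume * (eLpNorm (frobNorm v) q volume * eLpNorm z r volume) ≠ ⊤ :=
    ENNReal.mul_ne_top hu.eLpNorm_ne_top (ENNReal.mul_ne_top hv.eLpNorm_ne_top hz.eLpNorm_ne_top)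
  refine (abs_integral_le_toReal_eLpNorm_one _ _).trans ?_
  rw [gradLp, ← ENNReal.toReal_mul, ← ENNReal.toReal_mul]
  exact ENNReal.toReal_mono hfin (eLpNorm_inner_convTerm_le hu.1 hv.1 hz.1)

lemma abs_bstar_le (u v w : EuclideanSpace ℝ (Fin d) → EuclideanSpace ℝ (Fin d)) :
    |bstar u v w| ≤
      |l2inner (convTerm u v) w| / 2 + |l2inner (convTerm u w) v| / 2 := by
  unfold bstar
  refine (abs_sub _ _).trans_eq ?_
  rw [abs_mul, abs_mul, abs_of_pos (by norm_num : (0 : ℝ) < 1 / 2)]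
  ring

end FrobeniusNorm

/-- Mixed-norm bound for the trilinear form in three dimensions: there exists a
universal constant `C > 0` such that
`|b*(u,v,w)| ≤ C ‖u‖_{L²} (‖Dv‖_{L³} + ‖v‖_{L∞}) ‖Dw‖_{L²}` for all C¹ compactly
supported vector fields `u, v, w : ℝ³ → ℝ³`. -/
theorem bstar_mixed_norm_bound_3d :
    ∃ C > 0, ∀ u v w : EuclideanSpace ℝ (Fin 3) → EuclideanSpace ℝ (Fin 3),
      ContDiff ℝ 1 u → ContDiff ℝ 1 v → ContDiff ℝ 1 w →
      HasCompactSupport u → HasCompactSupport v → HasCompactSupport w →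
      |bstar u v w| ≤
        C * (eLpNorm u 2 volume).toReal *
          (gradLp 3 v + (eLpNorm v ⊤ volume).toReal) * gradLp 2 w := by
  set S : ℝ :=
    (eLpNormLESNormFDerivOfEqInnerConst (volume : Measure (EuclideanSpace ℝ (Fin 3))) 2 : ℝ)
  refine ⟨S + 1, by positivity, fun u v w hu hv hw h2u h2v h2w => ?_⟩
  have memLp {f : EuclideanSpace ℝ (Fin 3) → EuclideanSpace ℝ (Fin 3)} (hf : ContDiff ℝ 1 f)
      (h2f : HasCompactSupport f) (p : ℝ≥0∞) : MemLp f p volume :=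
    hf.continuous.memLp_of_hasCompactSupport h2f
  have hvw := abs_l2inner_convTerm_le (memLp hu h2u 2) (hv.memLp_frobNorm h2v 3) (memLp hw h2w 6)
  have hwv := abs_l2inner_convTerm_le (memLp hu h2u 2) (hw.memLp_frobNorm h2w 2) (memLp hv h2v ⊤)
  have hsob : (eLpNorm w 6 volume).toReal ≤ S * gradLp 2 w := by
    simpa using toReal_eLpNorm_le_gradLp_of_eq_inner hw h2w (p := 2) (p' := 6) (by norm_num)
      (by norm_num) (by norm_num)
  have hv₃ := gradLp_nonneg 3 v
  have hw₂ := gradLp_nonneg 2 w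
  calc |bstar u v w|
      ≤ |l2inner (convTerm u v) w| / 2 + |l2inner (convTerm u w) v| / 2 := abs_bstar_le u v w
    _ ≤ (eLpNorm u 2 volume).toReal * (gradLp 3 v * (S * gradLp 2 w)) / 2 +
          (eLpNorm u 2 volume).toReal * (gradLp 2 w * (eLpNorm v ⊤ volume).toReal) / 2 := by
        gcongr
        exact hvw.trans (by gcongr)
    _ ≤ (S + 1) * (eLpNorm u 2 volume).toReal *
          (gradLp 3 v + (eLpNorm v ⊤ volume).toReal) * gradLp 2 w := by
        have : 0 ≤ (eLpNorm u 2 volume).toReal * gradLp 2 w *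
            (S * gradLp 3 v + 2 * S * (eLpNorm v ⊤ volume).toReal + 2 * gradLp 3 v +
              (eLpNorm v ⊤ volume).toReal) := by positivity
        linarith
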